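/- arXiv:q-alg/9606015 — 2 statements merged into one kernel-verified Lean document; each statement's English description precedes it below -/
import Mathlib

section
/- Let n ≥ 1 and let γ = (γ_1, …, γ_n) : [0,1] → X_n be a continuous path in the configuration space of n ordered points in the plane. Then there exists an isotopy ψ : [0,1] × ℝ² → ℝ² such that ψ(0,·) is the identity map of ℝ² and ψ(t, γ_i(0)) = γ_i(t) for every t ∈ [0,1] and every i ∈ {1, …, n}. -/
open scoped NNReal

/-- The plane. -/
abbrev Plane : Type := ℝ × ℝ

noncomputable section Aux

/-- piecewise-linear bump -/
def pbump (d : ℝ) : ℝ := max (1 - d) 0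

lemma pbump_zero : pbump 0 = 1 := by norm_num [pbump]

lemma pbump_of_one_le {d : ℝ} (h : 1 ≤ d) : pbump d = 0 := by
  simp [pbump, max_eq_right, sub_nonpos.mpr h]

lemma continuous_pbump : Continuous pbump := by
  unfold pbump; fun_prop

lemma abs_pbump_sub (a b : ℝ) : |pbump a - pbump b| ≤ |a - b| := by
  have := abs_max_sub_max_le_abs (1 - a) (1 - b) 0
  rw [abs_sub_comm a b]
  simpa [pbump] using this

lemma lipschitz_bumpsum {n : ℕ} (p c : Fin n → Plane) {r ε : ℝ} (hr : 0 < r)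
    (hc : ∀ i, ‖c i‖ ≤ ε) (hK : (n : ℝ) * ε / r ≤ 1 / 2) :
    LipschitzWith (1/2 : ℝ≥0) (fun z : Plane => ∑ i, pbump (dist z (p i) / r) • c i) := by
  apply LipschitzWith.of_dist_le_mul
  intro x y
  have hterm : ∀ i : Fin n,
      ‖pbump (dist x (p i) / r) • c i - pbump (dist y (p i) / r) • c i‖
        ≤ ε / r * dist x y := by
    intro i
    rw [← sub_smul, norm_smul]
    have h1 : |pbump (dist x (p i) / r) - pbump (dist y (p i) / r)|
        ≤ dist x y / r := by
      refine (abs_pbump_sub _ _).trans ?_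
      rw [← sub_div, abs_div, abs_of_pos hr, div_le_div_iff_of_pos_right hr]
      exact (abs_dist_sub_le x y (p i))
    calc |pbump (dist x (p i) / r) - pbump (dist y (p i) / r)| * ‖c i‖
        ≤ (dist x y / r) * ε := by
          apply mul_le_mul h1 (hc i) (norm_nonneg _)
          positivity
      _ = ε / r * dist x y := by ring
  calc dist (∑ i, pbump (dist x (p i) / r) • c i) (∑ i, pbump (dist y (p i) / r) • c i)
      = ‖∑ i, (pbump (dist x (p i) / r) • c i - pbump (dist y (p i) / r) • c i)‖ := by
        rw [dist_eq_norm, ← Finset.sum_sub_distrib]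
    _ ≤ ∑ i : Fin n, ‖pbump (dist x (p i) / r) • c i - pbump (dist y (p i) / r) • c i‖ :=
        norm_sum_le _ _
    _ ≤ ∑ _i : Fin n, ε / r * dist x y := Finset.sum_le_sum fun i _ => hterm i
    _ = (n : ℝ) * ε / r * dist x y := by
        rw [Finset.sum_const, Finset.card_univ, Fintype.card_fin, nsmul_eq_mul]; ring
    _ ≤ (1/2 : ℝ) * dist x y := by
        apply mul_le_mul_of_nonneg_right hK dist_nonneg
    _ = ((1/2 : ℝ≥0) : ℝ) * dist x y := by norm_num

lemma exists_homeo (h : Plane → Plane) (hh : LipschitzWith (1/2 : ℝ≥0) h) :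
    ∃ e : Plane ≃ₜ Plane, ∀ z, e z = z + h z := by
  set f : Plane → Plane := fun z => z + h z with hf
  have hhd : ∀ x y : Plane, dist (h x) (h y) ≤ (1/2 : ℝ) * dist x y := by
    intro x y; have := hh.dist_le_mul x y; norm_num at this ⊢; linarith
  have key : ∀ x y, dist x y ≤ 2 * dist (f x) (f y) := by
    intro x y
    have h2 : dist x y ≤ dist (f x) (f y) + dist (h x) (h y) := by
      have hx : x - y = (f x - f y) - (h x - h y) := by simp [hf]; abel
      rw [dist_eq_norm, hx]
      calc ‖(f x - f y) - (h x - h y)‖ ≤ ‖f x - f y‖ + ‖h x - h y‖ := norm_sub_le _ _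
        _ = dist (f x) (f y) + dist (h x) (h y) := by rw [dist_eq_norm, dist_eq_norm]
    have := hhd x y
    linarith
  have hinj : Function.Injective f := by
    intro x y hxy
    have := key x y
    rw [hxy, dist_self] at this
    have h0 : dist x y ≤ 0 := by linarith
    exact dist_le_zero.mp h0
  have hsurj : Function.Surjective f := by
    intro w
    have hg : ContractingWith (1/2 : ℝ≥0) (fun x : Plane => w - h x) := by
      constructor
      · exact NNReal.coe_lt_coe.mp (by norm_num)
      · apply LipschitzWith.of_dist_le_mul
        intro x y
        have : dist (w - h x) (w - h y) = dist (h x) (h y) := by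
          rw [dist_eq_norm, dist_eq_norm, sub_sub_sub_cancel_left, norm_sub_rev]
        rw [this]
        have := hhd x y
        norm_num
        linarith
    obtain ⟨x, hx⟩ : ∃ x : Plane, w - h x = x :=
      ⟨_, hg.fixedPoint_isFixedPt⟩
    rw [sub_eq_iff_eq_add] at hx
    exact ⟨x, hx.symm⟩
  have hcont : Continuous f := continuous_id.add hh.continuous
  let E : Plane ≃ Plane := Equiv.ofBijective f ⟨hinj, hsurj⟩
  have hcont' : Continuous E.symm := by
    apply LipschitzWith.continuous (K := 2)
    apply LipschitzWith.of_dist_le_mul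
    intro a b
    have := key (E.symm a) (E.symm b)
    have ha : f (E.symm a) = a := E.apply_symm_apply a
    have hb : f (E.symm b) = b := E.apply_symm_apply b
    rw [ha, hb] at this
    simpa using this
  exact ⟨⟨E, hcont, hcont'⟩, fun z => rfl⟩

end Aux

noncomputable section Aux2

variable {n : ℕ}

/-- Elementary move map. -/
def gmap (γ : unitInterval → Fin n → Plane) (r : ℝ) (s t : unitInterval) (x : Plane) : Plane :=
  x + ∑ i, pbump (dist x (γ s i) / r) • (γ t i - γ s i)

lemma gmap_self (γ : unitInterval → Fin n → Plane) (r : ℝ) (s : unitInterval) (x : Plane) :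
    gmap γ r s s x = x := by simp [gmap]

lemma gmap_continuous (γ : unitInterval → Fin n → Plane) (hγ : Continuous γ) (r : ℝ)
    (s : unitInterval) {α : Type*} [TopologicalSpace α] {u : α → unitInterval} {v : α → Plane}
    (hu : Continuous u) (hv : Continuous v) :
    Continuous (fun a => gmap γ r s (u a) (v a)) := by
  unfold gmap
  apply hv.add
  apply continuous_finset_sum
  intro i _
  apply Continuous.smul (f := fun a => pbump (dist (v a) (γ s i) / r))
    (g := fun a => γ (u a) i - γ s i)
  · exact continuous_pbump.comp ((hv.dist continuous_const).div_const r)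
  · exact ((continuous_apply i).comp (hγ.comp hu)).sub continuous_const

lemma gmap_apply_pt (γ : unitInterval → Fin n → Plane) {r : ℝ} (hr : 0 < r)
    (s t : unitInterval) (i : Fin n)
    (hsep : ∀ j, j ≠ i → r ≤ dist (γ s i) (γ s j)) :
    gmap γ r s t (γ s i) = γ t i := by
  unfold gmap
  rw [Finset.sum_eq_single i]
  · rw [dist_self, zero_div, pbump_zero, one_smul]; abel
  · intro j _ hj
    rw [pbump_of_one_le, zero_smul]
    rw [one_le_div hr]
    exact hsep j hj
  · simp

lemma gmap_homeo (γ : unitInterval → Fin n → Plane) {r ε : ℝ} (s t : unitInterval) (hr : 0 < r)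
    (hc : ∀ i, dist (γ t i) (γ s i) ≤ ε) (hK : (n : ℝ) * ε / r ≤ 1 / 2) :
    ∃ e : Plane ≃ₜ Plane, ∀ x, gmap γ r s t x = e x := by
  obtain ⟨e, he⟩ := exists_homeo (fun x => ∑ i, pbump (dist x (γ s i) / r) • (γ t i - γ s i))
    (lipschitz_bumpsum (γ s) (fun i => γ t i - γ s i) hr
      (fun i => by rw [← dist_eq_norm]; exact hc i) hK)
  exact ⟨e, fun x => (he x).symm⟩

/-- Iterated composition of elementary moves along partition points. -/
def Psi (γ : unitInterval → Fin n → Plane) (r : ℝ) (pt : ℕ → unitInterval) :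
    ℕ → Plane → Plane
  | 0 => id
  | (k + 1) => gmap γ r (pt k) (pt (k + 1)) ∘ Psi γ r pt k

end Aux2
theorem statement_0 (n : ℕ) (hn : 1 ≤ n)
    (γ : unitInterval → Fin n → Plane)
    (hγcont : Continuous γ)
    (hγconf : ∀ t : unitInterval, Function.Injective (γ t)) :
    ∃ ψ : unitInterval × Plane → Plane,
      Continuous ψ ∧
      (∀ t : unitInterval, ∃ e : Plane ≃ₜ Plane, (fun z => ψ (t, z)) = e) ∧
      (∀ z : Plane, ψ (0, z) = z) ∧
      (∀ (t : unitInterval) (i : Fin n), ψ (t, γ 0 i) = γ t i) := by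
  -- separation constant
  obtain ⟨δ, hδpos, hδ⟩ : ∃ δ : ℝ, 0 < δ ∧
      ∀ (t : unitInterval) (i j : Fin n), i ≠ j → δ ≤ dist (γ t i) (γ t j) := by
    have key : ∀ p : Fin n × Fin n, ∃ d : ℝ, 0 < d ∧
        (p.1 ≠ p.2 → ∀ t, d ≤ dist (γ t p.1) (γ t p.2)) := by
      intro p
      by_cases h : p.1 = p.2
      · exact ⟨1, one_pos, fun hc => absurd h hc⟩
      · have hcont : Continuous fun t : unitInterval => dist (γ t p.1) (γ t p.2) :=
          Continuous.dist ((continuous_apply p.1).comp hγcont)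
            ((continuous_apply p.2).comp hγcont)
        obtain ⟨t₀, -, ht₀⟩ := isCompact_univ.exists_isMinOn (Set.univ_nonempty)
          hcont.continuousOn
        refine ⟨dist (γ t₀ p.1) (γ t₀ p.2), dist_pos.2 fun hc => h (hγconf t₀ hc),
          fun _ t => ht₀ (Set.mem_univ t)⟩
    choose D hD using key
    have : Nonempty (Fin n × Fin n) := ⟨(⟨0, hn⟩, ⟨0, hn⟩)⟩
    have hne : (Finset.univ : Finset (Fin n × Fin n)).Nonempty := Finset.univ_nonempty
    refine ⟨Finset.univ.inf' hne D, ?_, ?_⟩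
    · rw [Finset.lt_inf'_iff]
      exact fun p _ => (hD p).1
    · intro t i j hij
      exact le_trans (Finset.inf'_le D (Finset.mem_univ (i, j))) ((hD (i, j)).2 hij t)
  -- parameters
  have hn0 : (0 : ℝ) < n := by exact_mod_cast hn
  set ε : ℝ := δ / (4 * n) with hε
  have hεpos : 0 < ε := by positivity
  set r : ℝ := δ / 2 with hrdef
  have hr : 0 < r := by positivity
  have hK : (n : ℝ) * ε / r ≤ 1 / 2 := by
    have hq : (n : ℝ) * ε / r = 1 / 2 := by
      rw [hε, hrdef]; field_simp; ring
    rw [hq]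
  have hsep : ∀ (s : unitInterval) (i : Fin n), ∀ j, j ≠ i → r ≤ dist (γ s i) (γ s j) := by
    intro s i j hj
    refine le_trans ?_ (hδ s i j (Ne.symm hj))
    rw [hrdef]; linarith
  -- uniform continuity and partition size
  have hUC : UniformContinuous γ := CompactSpace.uniformContinuous_of_continuous hγcont
  obtain ⟨η, hηpos, hηε⟩ := Metric.uniformContinuous_iff.mp hUC ε hεpos
  obtain ⟨N', hN'⟩ := exists_nat_one_div_lt hηpos
  obtain ⟨N, hN1, hNη⟩ : ∃ N : ℕ, 1 ≤ N ∧ 1 / (N : ℝ) < η :=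
    ⟨N' + 1, Nat.le_add_left 1 N', by exact_mod_cast hN'⟩
  have hNpos : (0 : ℝ) < N := by exact_mod_cast hN1
  have hmove : ∀ s t : unitInterval, dist t s ≤ 1 / (N : ℝ) →
      ∀ i, dist (γ t i) (γ s i) ≤ ε := by
    intro s t h i
    refine le_trans (dist_le_pi_dist (γ t) (γ s) i) (le_of_lt (hηε ?_))
    exact lt_of_le_of_lt h hNη
  -- partition points
  set pt : ℕ → unitInterval := fun k =>
    ⟨min ((k : ℝ) / N) 1, le_min (by positivity) zero_le_one, min_le_right _ _⟩ with hptdef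
  have hptval : ∀ k : ℕ, k ≤ N → (pt k : ℝ) = (k : ℝ) / N := by
    intro k hk
    show min ((k : ℝ) / N) 1 = (k : ℝ) / N
    exact min_eq_left (by rw [div_le_one hNpos]; exact_mod_cast hk)
  have hptdist : ∀ k : ℕ, dist (pt (k + 1)) (pt k) ≤ 1 / (N : ℝ) := by
    intro k
    have e1 : ((pt (k + 1)) : ℝ) = min ((k : ℝ) / N + 1 / N) 1 := by
      show min (((k + 1 : ℕ) : ℝ) / N) 1 = _
      push_cast
      rw [add_div]
    have e2 : ((pt k) : ℝ) = min ((k : ℝ) / N) 1 := rfl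
    rw [Subtype.dist_eq, Real.dist_eq, e1, e2]
    set a := (k : ℝ) / N with ha
    have h1 : min a 1 ≤ min (a + 1 / N) 1 :=
      min_le_min (le_add_of_nonneg_right (by positivity)) le_rfl
    have h2 : min (a + 1 / N) 1 ≤ min a 1 + 1 / N := by
      rw [← min_add_add_right]
      exact min_le_min le_rfl (le_add_of_nonneg_right (by positivity))
    rw [abs_of_nonneg (by linarith)]
    linarith
  -- index function
  set T : unitInterval → ℕ := fun t => min (N - 1) ⌊(t : ℝ) * N⌋₊ with hTdef
  have hTle : ∀ t, T t ≤ N - 1 := fun t => min_le_left _ _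
  have hTltN : ∀ t, T t < N := fun t => lt_of_le_of_lt (hTle t) (Nat.sub_lt hN1 one_pos)
  have hT1 : ∀ t : unitInterval, (T t : ℝ) ≤ (t : ℝ) * N := by
    intro t
    refine le_trans ?_ (Nat.floor_le (mul_nonneg t.2.1 (le_of_lt hNpos)))
    exact_mod_cast Nat.cast_le.mpr (min_le_right _ _)
  have hT2 : ∀ t : unitInterval, (t : ℝ) * N ≤ T t + 1 := by
    intro t
    rcases Nat.lt_or_ge ⌊(t : ℝ) * N⌋₊ N with h | h
    · have hTt : T t = ⌊(t : ℝ) * N⌋₊ := min_eq_right (by omega)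
      rw [hTt]
      exact le_of_lt (Nat.lt_floor_add_one _)
    · have hTt : T t = N - 1 := min_eq_left (by omega)
      rw [hTt]
      have h1 : (t : ℝ) * N ≤ N := by nlinarith [t.2.2, hNpos]
      have hcast : ((N - 1 : ℕ) : ℝ) + 1 = N := by
        rw [Nat.cast_sub hN1]; push_cast; ring
      rw [hcast]
      exact h1
  have hptT : ∀ t : unitInterval, ((pt (T t)) : ℝ) = (T t : ℝ) / N :=
    fun t => hptval _ (le_trans (hTle t) (Nat.sub_le N 1))
  have hptT_le : ∀ t : unitInterval, dist t (pt (T t)) ≤ 1 / (N : ℝ) := by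
    intro t
    rw [Subtype.dist_eq, Real.dist_eq, hptT t]
    have h1 : (T t : ℝ) / N ≤ (t : ℝ) := by
      rw [div_le_iff₀ hNpos]; exact hT1 t
    have h2 : (t : ℝ) ≤ (T t : ℝ) / N + 1 / N := by
      have h3 := hT2 t
      rw [← le_div_iff₀ hNpos] at h3
      rw [← add_div]
      exact h3
    rw [abs_of_nonneg (by linarith)]
    linarith
  -- the isotopy pieces
  set Ψ : ℕ → Plane → Plane := Psi γ r pt with hΨdef
  have hΨcont : ∀ k, Continuous (Ψ k) := by
    intro k
    induction k with
    | zero => exact continuous_id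
    | succ k ih =>
      show Continuous fun z => gmap γ r (pt k) (pt (k + 1)) (Ψ k z)
      exact gmap_continuous γ hγcont r (pt k) continuous_const ih
  have hΨpt : ∀ k (i : Fin n), Ψ k (γ 0 i) = γ (pt k) i := by
    intro k i
    induction k with
    | zero =>
      have hpt0 : pt 0 = 0 := by
        apply Subtype.ext
        show min (((0 : ℕ) : ℝ) / N) 1 = _
        norm_num
      rw [hpt0]; rfl
    | succ k ih =>
      show gmap γ r (pt k) (pt (k + 1)) (Ψ k (γ 0 i)) = _
      rw [ih]
      exact gmap_apply_pt γ hr (pt k) (pt (k + 1)) i (fun j hj => hsep (pt k) i j hj)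
  have hΨhomeo : ∀ k, ∃ e : Plane ≃ₜ Plane, Ψ k = ⇑e := by
    intro k
    induction k with
    | zero => exact ⟨Homeomorph.refl Plane, rfl⟩
    | succ k ih =>
      obtain ⟨e1, he1⟩ := ih
      obtain ⟨e2, he2⟩ := gmap_homeo γ (pt k) (pt (k + 1)) hr
        (hmove (pt k) (pt (k + 1)) (hptdist k)) hK
      refine ⟨e1.trans e2, funext fun z => ?_⟩
      show gmap γ r (pt k) (pt (k + 1)) (Ψ k z) = e2 (e1 z)
      rw [he1]
      exact he2 _
  refine ⟨fun q => gmap γ r (pt (T q.1)) q.1 (Ψ (T q.1) q.2), ?_, ?_, ?_, ?_⟩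
  · -- continuity
    refine LocallyFinite.continuous
      (f := fun k : Fin N =>
        (Set.Icc (pt (k : ℕ)) (pt ((k : ℕ) + 1))) ×ˢ (Set.univ : Set Plane))
      (locallyFinite_of_finite _) ?_ (fun k => (isClosed_Icc).prod isClosed_univ) ?_
    · apply Set.eq_univ_of_forall
      intro q
      rw [Set.mem_iUnion]
      refine ⟨⟨T q.1, hTltN q.1⟩, Set.mem_Icc.mpr ⟨?_, ?_⟩, Set.mem_univ _⟩
      · rw [← Subtype.coe_le_coe, hptT q.1]
        rw [div_le_iff₀ hNpos]
        exact hT1 q.1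
      · rw [← Subtype.coe_le_coe]
        apply le_min
        · rw [le_div_iff₀ hNpos]
          push_cast
          exact hT2 q.1
        · exact q.1.2.2
    · intro k
      apply ContinuousOn.congr
        (f := fun q : unitInterval × Plane => gmap γ r (pt (k : ℕ)) q.1 (Ψ (k : ℕ) q.2))
      · exact (gmap_continuous γ hγcont r (pt (k : ℕ)) continuous_fst
          ((hΨcont (k : ℕ)).comp continuous_snd)).continuousOn
      · rintro ⟨t, z⟩ hq
        obtain ⟨ht, -⟩ := hq
        rw [Set.mem_Icc] at ht
        have hkN : (k : ℕ) < N := k.2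
        have hkt : ((k : ℕ) : ℝ) ≤ (t : ℝ) * N := by
          have h1 : ((pt (k : ℕ)) : ℝ) ≤ (t : ℝ) := Subtype.coe_le_coe.mpr ht.1
          rw [hptval _ (le_of_lt hkN)] at h1
          rw [← div_le_iff₀ hNpos]
          exact h1
        have htk : (t : ℝ) * N ≤ ((k : ℕ) : ℝ) + 1 := by
          have h1 : (t : ℝ) ≤ ((pt ((k : ℕ) + 1)) : ℝ) := Subtype.coe_le_coe.mpr ht.2
          have h2 : ((pt ((k : ℕ) + 1)) : ℝ) ≤ (((k : ℕ) : ℝ) + 1) / N := by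
            show min ((((k : ℕ) + 1 : ℕ) : ℝ) / N) 1 ≤ _
            refine le_trans (min_le_left _ _) ?_
            push_cast
            exact le_rfl
          rw [← le_div_iff₀ hNpos]
          linarith
        have hfl : (k : ℕ) ≤ ⌊(t : ℝ) * N⌋₊ := Nat.le_floor hkt
        rcases Nat.lt_or_ge ⌊(t : ℝ) * N⌋₊ ((k : ℕ) + 1) with h | h
        · have hfloor : ⌊(t : ℝ) * N⌋₊ = (k : ℕ) := by omega
          have hTt : T t = (k : ℕ) := by
            show min (N - 1) ⌊(t : ℝ) * N⌋₊ = (k : ℕ)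
            rw [hfloor]
            exact min_eq_right (by omega)
          show gmap γ r (pt (T t)) t (Ψ (T t) z) = gmap γ r (pt (k : ℕ)) t (Ψ (k : ℕ) z)
          rw [hTt]
        · have h1 : (((k : ℕ) : ℝ) + 1) ≤ (t : ℝ) * N := by
            have h2 : (((k : ℕ) + 1 : ℕ) : ℝ) ≤ (⌊(t : ℝ) * N⌋₊ : ℝ) := Nat.cast_le.mpr h
            have h3 := Nat.floor_le (mul_nonneg t.2.1 (le_of_lt hNpos))
            push_cast at h2
            linarith
          have heq : (t : ℝ) * N = ((k : ℕ) : ℝ) + 1 := le_antisymm htk h1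
          by_cases hk1 : (k : ℕ) + 1 ≤ N - 1
          · have hfl2 : ⌊(t : ℝ) * N⌋₊ = (k : ℕ) + 1 := by
              have : (t : ℝ) * N = (((k : ℕ) + 1 : ℕ) : ℝ) := by push_cast; exact heq
              rw [this, Nat.floor_natCast]
            have hTt : T t = (k : ℕ) + 1 := by
              show min (N - 1) ⌊(t : ℝ) * N⌋₊ = (k : ℕ) + 1
              rw [hfl2]
              exact min_eq_right hk1
            have hteq : t = pt ((k : ℕ) + 1) := by
              apply Subtype.ext
              rw [hptval ((k : ℕ) + 1) (by omega)]
              rw [eq_div_iff (ne_of_gt hNpos)]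
              push_cast
              exact heq
            show gmap γ r (pt (T t)) t (Ψ (T t) z) = gmap γ r (pt (k : ℕ)) t (Ψ (k : ℕ) z)
            rw [hTt]
            conv_lhs => rw [hteq]
            rw [gmap_self]
            show gmap γ r (pt (k : ℕ)) (pt ((k : ℕ) + 1)) (Ψ (k : ℕ) z) = _
            rw [hteq]
          · have hTt : T t = (k : ℕ) := by
              show min (N - 1) ⌊(t : ℝ) * N⌋₊ = (k : ℕ)
              rw [min_eq_left (by omega)]
              omega
            show gmap γ r (pt (T t)) t (Ψ (T t) z) = gmap γ r (pt (k : ℕ)) t (Ψ (k : ℕ) z)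
            rw [hTt]
  · -- each slice is a homeomorphism
    intro t
    obtain ⟨e1, he1⟩ := hΨhomeo (T t)
    obtain ⟨e2, he2⟩ := gmap_homeo γ (pt (T t)) t hr (hmove _ t (hptT_le t)) hK
    refine ⟨e1.trans e2, funext fun z => ?_⟩
    show gmap γ r (pt (T t)) t (Ψ (T t) z) = e2 (e1 z)
    rw [he1]
    exact he2 _
  · -- identity at time 0
    intro z
    have hT0 : T 0 = 0 := by
      show min (N - 1) ⌊((0 : unitInterval) : ℝ) * N⌋₊ = 0
      norm_num
    have hpt0 : pt 0 = 0 := by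
      apply Subtype.ext
      show min (((0 : ℕ) : ℝ) / N) 1 = _
      norm_num
    show gmap γ r (pt (T 0)) 0 (Ψ (T 0) z) = z
    rw [hT0, hpt0]
    show gmap γ r 0 0 (Ψ 0 z) = z
    rw [gmap_self]
    rfl
  · -- carries the points
    intro t i
    show gmap γ r (pt (T t)) t (Ψ (T t) (γ 0 i)) = γ t i
    rw [hΨpt (T t) i]
    exact gmap_apply_pt γ hr (pt (T t)) t i (fun j hj => hsep _ i j hj)
end

section
/- Let n ≥ 1 and let γ, γ′ : [0,1] → X_n be continuous paths with γ(0) = γ′(0) and γ(1) = γ′(1) which are homotopic relative to {0,1} within X_n. Let ψ, ψ′ : [0,1] × ℝ² → ℝ² be isotopies with ψ(0,·) = ψ′(0,·) = id_{ℝ²}, ψ(t, γ_i(0)) = γ_i(t) and ψ′(t, γ_i(0)) = γ′_i(t) for all t and i. Then there exists a continuous map H : [0,1] × [0,1] × ℝ² → ℝ² such that H(s,t,·) is a homeomorphism of ℝ² for every (s,t), H(s,0,·) = id_{ℝ²} for every s, H(0,t,·) = ψ(t,·) and H(1,t,·) = ψ′(t,·) for every t, and H(s,1,γ_i(0)) =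 γ_i(1) for every s and every i ∈ {1,…,n}. -/
noncomputable section PushSec

/-- bump function: 1 at `c`, 0 outside ball of radius `r`. -/
def bump (r : ℝ) (c z : Plane) : ℝ := max 0 (1 - dist z c / r)

lemma bump_nonneg (r : ℝ) (c z : Plane) : 0 ≤ bump r c z := le_max_left _ _

lemma bump_le_one {r : ℝ} (hr : 0 < r) (c z : Plane) : bump r c z ≤ 1 := by
  apply max_le (by norm_num)
  have : 0 ≤ dist z c / r := div_nonneg dist_nonneg hr.le
  linarith

lemma bump_self {r : ℝ} (hr : 0 < r) (c : Plane) : bump r c c = 1 := by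
  simp [bump, dist_self]

lemma bump_far {r : ℝ} {c z : Plane} (h : r ≤ dist z c) (hr : 0 < r) : bump r c z = 0 := by
  have : 1 - dist z c / r ≤ 0 := by
    have := (div_le_div_iff_of_pos_right hr).2 h
    rw [div_self hr.ne'] at this
    linarith
  simp [bump, max_eq_left this]

lemma abs_bump_sub_le {r : ℝ} (hr : 0 < r) (c z z' : Plane) :
    |bump r c z - bump r c z'| ≤ dist z z' / r := by
  have h1 : |bump r c z - bump r c z'| ≤ |(1 - dist z c / r) - (1 - dist z' c / r)| := by
    have := abs_max_sub_max_le_abs (1 - dist z c / r) (1 - dist z' c / r) 0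
    simpa [bump, max_comm] using this
  refine h1.trans ?_
  have : (1 - dist z c / r) - (1 - dist z' c / r) = (dist z' c - dist z c) / r := by ring
  rw [this, abs_div, abs_of_pos hr]
  have := abs_dist_sub_le z' z c
  have h2 : |dist z' c - dist z c| ≤ dist z z' := by simpa [dist_comm] using this
  gcongr

lemma abs_bump_sub_le_center {r : ℝ} (hr : 0 < r) (c c' z : Plane) :
    |bump r c z - bump r c' z| ≤ dist c c' / r := by
  have h1 : |bump r c z - bump r c' z| ≤ |(1 - dist z c / r) - (1 - dist z c' / r)| := by
    have := abs_max_sub_max_le_abs (1 - dist z c / r) (1 - dist z c' / r) 0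
    simpa [bump, max_comm] using this
  refine h1.trans ?_
  have : (1 - dist z c / r) - (1 - dist z c' / r) = (dist z c' - dist z c) / r := by ring
  rw [this, abs_div, abs_of_pos hr]
  have := abs_dist_sub_le c' c z
  have h2 : |dist z c' - dist z c| ≤ dist c c' := by simpa [dist_comm] using this
  gcongr

lemma bump_continuous (r : ℝ) : Continuous (fun p : Plane × Plane => bump r p.1 p.2) := by
  unfold bump
  fun_prop

/-- The push map: moves `c` to `y`, identity outside ball of radius `r` around `c`. -/
def push (r : ℝ) (c y z : Plane) : Plane := z + bump r c z • (y - c)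

lemma push_continuous (r : ℝ) :
    Continuous (fun p : (Plane × Plane) × Plane => push r p.1.1 p.1.2 p.2) := by
  unfold push bump
  fun_prop

lemma push_center {r : ℝ} (hr : 0 < r) (c y : Plane) : push r c y c = y := by
  simp [push, bump_self hr]

lemma push_far {r : ℝ} {c z : Plane} (hr : 0 < r) (h : r ≤ dist z c) (y : Plane) :
    push r c y z = z := by
  simp [push, bump_far h hr]

lemma push_id (r : ℝ) (c z : Plane) : push r c c z = z := by simp [push]

lemma dist_eq_norm_plane (z z' : Plane) : dist z z' = ‖z - z'‖ := dist_eq_norm z z'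

lemma push_inj {r : ℝ} (hr : 0 < r) {c y : Plane} (hy : dist y c ≤ r / 2) :
    Function.Injective (push r c y) := by
  intro z z' h
  unfold push at h
  have hzz : z - z' = (bump r c z' - bump r c z) • (y - c) := by
    have h' : z + bump r c z • (y - c) = z' + bump r c z' • (y - c) := h
    rw [sub_smul]
    linear_combination (norm := module) h'
  have hnorm : ‖z - z'‖ ≤ (dist z z' / r) * (r / 2) := by
    rw [hzz, norm_smul]
    gcongr
    · calc |bump r c z' - bump r c z| ≤ dist z' z / r := abs_bump_sub_le hr c z' z
        _ = dist z z' / r := by rw [dist_comm]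
    · rw [← dist_eq_norm_plane]; exact hy
  rw [← dist_eq_norm_plane] at hnorm
  have : dist z z' ≤ dist z z' / 2 := by
    calc dist z z' ≤ dist z z' / r * (r / 2) := hnorm
      _ = dist z z' / 2 := by field_simp
  have : dist z z' = 0 := by linarith [dist_nonneg (x := z) (y := z')]
  exact eq_of_dist_eq_zero this

lemma push_contraction {r : ℝ} (hr : 0 < r) {c y : Plane} (hy : dist y c ≤ r / 2) (w : Plane) :
    ContractingWith (1/2 : NNReal) (fun z : Plane => w - bump r c z • (y - c)) := by
  constructor
  · have : ((1/2 : NNReal) : ℝ) < ((1:NNReal) : ℝ) := by push_cast; norm_num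
    exact_mod_cast this
  · apply LipschitzWith.of_dist_le_mul
    intro z z'
    have : dist (w - bump r c z • (y - c)) (w - bump r c z' • (y - c))
        = ‖(bump r c z' - bump r c z) • (y - c)‖ := by
      rw [dist_eq_norm_plane]
      rw [sub_smul]
      congr 1
      abel
    rw [this, norm_smul]
    calc |bump r c z' - bump r c z| * ‖y - c‖
        ≤ (dist z' z / r) * (r / 2) := by
          gcongr
          · exact abs_bump_sub_le hr c z' z
          · rw [← dist_eq_norm_plane]; exact hy
      _ = (1/2 : ℝ) * dist z z' := by rw [dist_comm]; field_simp
      _ = ((1/2 : NNReal) : ℝ) * dist z z' := by norm_num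

/-- Inverse of the push map (via Banach fixed point). -/
def pushInv (r : ℝ) (c y w : Plane) : Plane :=
  if h : 0 < r ∧ dist y c ≤ r / 2 then
    (push_contraction h.1 h.2 w).fixedPoint _
  else w

lemma pushInv_fixed {r : ℝ} (hr : 0 < r) {c y : Plane} (hy : dist y c ≤ r / 2) (w : Plane) :
    pushInv r c y w = w - bump r c (pushInv r c y w) • (y - c) := by
  rw [pushInv, dif_pos ⟨hr, hy⟩]
  exact ((push_contraction hr hy w).fixedPoint_isFixedPt).symm

lemma push_pushInv {r : ℝ} (hr : 0 < r) {c y : Plane} (hy : dist y c ≤ r / 2) (w : Plane) :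
    push r c y (pushInv r c y w) = w := by
  rw [push]
  nth_rewrite 1 [pushInv_fixed hr hy w]
  abel

lemma pushInv_push {r : ℝ} (hr : 0 < r) {c y : Plane} (hy : dist y c ≤ r / 2) (z : Plane) :
    pushInv r c y (push r c y z) = z := by
  apply push_inj hr hy
  rw [push_pushInv hr hy]

lemma dist_pushInv_le {r : ℝ} (hr : 0 < r) {c y c' y' : Plane}
    (hy : dist y c ≤ r / 2) (hy' : dist y' c' ≤ r / 2) (w w' : Plane) :
    dist (pushInv r c y w) (pushInv r c' y' w')
      ≤ 2 * dist w w' + 3 * dist c c' + 2 * dist y y' := by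
  set z := pushInv r c y w with hz
  set z' := pushInv r c' y' w' with hz'
  have e1 : z = w - bump r c z • (y - c) := pushInv_fixed hr hy w
  have e2 : z' = w' - bump r c' z' • (y' - c') := pushInv_fixed hr hy' w'
  have key : dist z z' ≤ dist w w' + (dist z z' / 2 + dist c c' / 2 + (dist y y' + dist c c')) := by
    calc dist z z' = ‖(w - w') - (bump r c z • (y - c) - bump r c' z' • (y' - c'))‖ := by
          rw [dist_eq_norm_plane]
          nth_rewrite 1 [e1]; nth_rewrite 1 [e2]
          congr 1; abel
      _ ≤ ‖w - w'‖ + ‖bump r c z • (y - c) - bump r c' z' • (y' - c')‖ := norm_sub_le _ _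
      _ ≤ dist w w' + (dist z z' / 2 + dist c c' / 2 + (dist y y' + dist c c')) := by
          rw [← dist_eq_norm_plane]
          gcongr
          calc ‖bump r c z • (y - c) - bump r c' z' • (y' - c')‖
              = ‖(bump r c z - bump r c z') • (y - c) + (bump r c z' - bump r c' z') • (y - c)
                  + bump r c' z' • ((y - c) - (y' - c'))‖ := by
                congr 1
                module
            _ ≤ ‖(bump r c z - bump r c z') • (y - c)‖ + ‖(bump r c z' - bump r c' z') • (y - c)‖
                  + ‖bump r c' z' • ((y - c) - (y' - c'))‖ := norm_add₃_le
            _ ≤ dist z z' / 2 + dist c c' / 2 + (dist y y' + dist c c') := by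
                gcongr ?_ + ?_ + ?_
                · rw [norm_smul]
                  calc |bump r c z - bump r c z'| * ‖y - c‖ ≤ (dist z z' / r) * (r/2) := by
                        gcongr
                        · exact abs_bump_sub_le hr c z z'
                        · rw [← dist_eq_norm_plane]; exact hy
                    _ = dist z z' / 2 := by field_simp
                · rw [norm_smul]
                  calc |bump r c z' - bump r c' z'| * ‖y - c‖ ≤ (dist c c' / r) * (r/2) := by
                        gcongr
                        · exact abs_bump_sub_le_center hr c c' z'
                        · rw [← dist_eq_norm_plane]; exact hy
                    _ = dist c c' / 2 := by field_simp
                · rw [norm_smul]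
                  calc |bump r c' z'| * ‖(y - c) - (y' - c')‖
                      ≤ 1 * (‖y - y'‖ + ‖c - c'‖) := by
                        gcongr
                        · rw [abs_of_nonneg (bump_nonneg _ _ _)]
                          exact bump_le_one hr _ _
                        · calc ‖(y - c) - (y' - c')‖ = ‖(y - y') - (c - c')‖ := by congr 1; abel
                            _ ≤ ‖y - y'‖ + ‖c - c'‖ := norm_sub_le _ _
                    _ = dist y y' + dist c c' := by
                        rw [one_mul, ← dist_eq_norm_plane, ← dist_eq_norm_plane]
  linarith

lemma pushInv_continuous {α : Type*} [TopologicalSpace α] {r : ℝ} (hr : 0 < r)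
    {c y w : α → Plane} (hc : Continuous c) (hy : Continuous y) (hw : Continuous w)
    (hcy : ∀ a, dist (y a) (c a) ≤ r / 2) :
    Continuous (fun a => pushInv r (c a) (y a) (w a)) := by
  rw [continuous_iff_continuousAt]
  intro a₀
  rw [ContinuousAt, tendsto_iff_dist_tendsto_zero]
  apply squeeze_zero (fun a => dist_nonneg)
    (fun a => dist_pushInv_le hr (hcy a) (hcy a₀) (w a) (w a₀))
  have h1 : Filter.Tendsto (fun a => dist (w a) (w a₀)) (nhds a₀) (nhds 0) := by
    rw [← tendsto_iff_dist_tendsto_zero]; exact hw.continuousAt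
  have h2 : Filter.Tendsto (fun a => dist (c a) (c a₀)) (nhds a₀) (nhds 0) := by
    rw [← tendsto_iff_dist_tendsto_zero]; exact hc.continuousAt
  have h3 : Filter.Tendsto (fun a => dist (y a) (y a₀)) (nhds a₀) (nhds 0) := by
    rw [← tendsto_iff_dist_tendsto_zero]; exact hy.continuousAt
  have := ((h1.const_mul 2).add (h2.const_mul 3)).add (h3.const_mul 2)
  simpa using this

section ListPush

variable {n : ℕ}

/-- apply pushes for all indices in the list, in order -/
def pushL (r : ℝ) (x y : Fin n → Plane) (L : List (Fin n)) (z : Plane) : Plane :=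
  L.foldl (fun w i => push r (x i) (y i) w) z

def pushLInv (r : ℝ) (x y : Fin n → Plane) (L : List (Fin n)) (w : Plane) : Plane :=
  L.foldr (fun i w => pushInv r (x i) (y i) w) w

@[simp] lemma pushL_nil (r : ℝ) (x y : Fin n → Plane) (z : Plane) :
    pushL r x y [] z = z := rfl

@[simp] lemma pushL_cons (r : ℝ) (x y : Fin n → Plane) (i : Fin n) (L : List (Fin n)) (z : Plane) :
    pushL r x y (i :: L) z = pushL r x y L (push r (x i) (y i) z) := rfl

@[simp] lemma pushLInv_nil (r : ℝ) (x y : Fin n → Plane) (w : Plane) :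
    pushLInv r x y [] w = w := rfl

@[simp] lemma pushLInv_cons (r : ℝ) (x y : Fin n → Plane) (i : Fin n) (L : List (Fin n)) (w : Plane) :
    pushLInv r x y (i :: L) w = pushInv r (x i) (y i) (pushLInv r x y L w) := rfl

variable {r : ℝ} {x y : Fin n → Plane}

lemma pushLInv_pushL (hr : 0 < r) (hclose : ∀ i, dist (y i) (x i) ≤ r / 2)
    (L : List (Fin n)) (z : Plane) : pushLInv r x y L (pushL r x y L z) = z := by
  induction L generalizing z with
  | nil => rfl
  | cons i L ih =>
    rw [pushL_cons, pushLInv_cons, ih]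
    exact pushInv_push hr (hclose i) z

lemma pushL_pushLInv (hr : 0 < r) (hclose : ∀ i, dist (y i) (x i) ≤ r / 2)
    (L : List (Fin n)) (w : Plane) : pushL r x y L (pushLInv r x y L w) = w := by
  induction L generalizing w with
  | nil => rfl
  | cons i L ih =>
    rw [pushLInv_cons, pushL_cons, push_pushInv hr (hclose i), ih]

lemma pushL_id (r : ℝ) (x : Fin n → Plane) (L : List (Fin n)) (z : Plane) :
    pushL r x x L z = z := by
  induction L generalizing z with
  | nil => rfl
  | cons i L ih => rw [pushL_cons, push_id, ih]

section Track
variable (hr : 0 < r) (hsep : ∀ i j, i ≠ j → 3 * r ≤ dist (x i) (x j))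
  (hclose : ∀ i, dist (y i) (x i) ≤ r / 2)
include hr hsep hclose

omit hclose in
lemma push_fix_x {i j : Fin n} (hij : j ≠ i) : push r (x j) (y j) (x i) = x i := by
  apply push_far hr ?_ _
  calc r ≤ 3 * r := by linarith
    _ ≤ dist (x i) (x j) := hsep i j (Ne.symm hij)

lemma push_fix_y {i j : Fin n} (hij : j ≠ i) : push r (x j) (y j) (y i) = y i := by
  apply push_far hr ?_ _
  have h1 : 3 * r ≤ dist (x i) (x j) := hsep i j (Ne.symm hij)
  have h2 : dist (y i) (x i) ≤ r / 2 := hclose i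
  have := dist_triangle (x i) (y i) (x j)
  calc r ≤ 3 * r - r / 2 := by linarith
    _ ≤ dist (y i) (x j) := by
        rw [dist_comm (x i) (y i)] at this
        linarith

lemma pushL_fix_y {i : Fin n} {L : List (Fin n)} (hL : i ∉ L) :
    pushL r x y L (y i) = y i := by
  induction L with
  | nil => rfl
  | cons j L ih =>
    rw [pushL_cons]
    have hji : j ≠ i := fun h => hL (h ▸ List.mem_cons_self (a := j) (l := L))
    rw [push_fix_y hr hsep hclose hji]
    exact ih (fun h => hL (List.mem_cons_of_mem j h))

lemma pushL_track {i : Fin n} {L : List (Fin n)} (hL : i ∈ L) (hnd : L.Nodup) :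
    pushL r x y L (x i) = y i := by
  induction L with
  | nil => simp at hL
  | cons j L ih =>
    rw [pushL_cons]
    rcases List.mem_cons.1 hL with h | h
    · subst h
      rw [push_center hr]
      have : i ∉ L := (List.nodup_cons.1 hnd).1
      exact pushL_fix_y hr hsep hclose this
    · have hji : j ≠ i := by
        rintro rfl
        exact (List.nodup_cons.1 hnd).1 h
      rw [push_fix_x hr hsep hji]
      exact ih h (List.nodup_cons.1 hnd).2

end Track

lemma pushL_continuous {α : Type*} [TopologicalSpace α] (r : ℝ) (L : List (Fin n))
    {x y : α → Fin n → Plane} {w : α → Plane}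
    (hx : Continuous x) (hy : Continuous y) (hw : Continuous w) :
    Continuous (fun a => pushL r (x a) (y a) L (w a)) := by
  induction L generalizing w with
  | nil => exact hw
  | cons i L ih =>
    simp only [pushL_cons]
    apply ih
    have := push_continuous r
    exact this.comp (((((continuous_apply i).comp hx).prodMk
      ((continuous_apply i).comp hy))).prodMk hw)

lemma pushLInv_continuous {α : Type*} [TopologicalSpace α] {r : ℝ} (hr : 0 < r)
    (L : List (Fin n)) {x y : α → Fin n → Plane} {w : α → Plane}
    (hx : Continuous x) (hy : Continuous y) (hw : Continuous w)
    (hclose : ∀ a i, dist (y a i) (x a i) ≤ r / 2) :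
    Continuous (fun a => pushLInv r (x a) (y a) L (w a)) := by
  induction L generalizing w with
  | nil => exact hw
  | cons i L ih =>
    simp only [pushLInv_cons]
    exact pushInv_continuous hr ((continuous_apply i).comp hx)
      ((continuous_apply i).comp hy) (ih hw) (fun a => hclose a i)

/-- push all points of configuration `x` to configuration `y` -/
def pushN (r : ℝ) (x y : Fin n → Plane) (z : Plane) : Plane :=
  pushL r x y (List.finRange n) z

def pushNInv (r : ℝ) (x y : Fin n → Plane) (w : Plane) : Plane :=
  pushLInv r x y (List.finRange n) w

lemma pushN_track (hr : 0 < r) (hsep : ∀ i j, i ≠ j → 3 * r ≤ dist (x i) (x j))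
    (hclose : ∀ i, dist (y i) (x i) ≤ r / 2) (i : Fin n) :
    pushN r x y (x i) = y i :=
  pushL_track hr hsep hclose (List.mem_finRange i) (List.nodup_finRange n)

lemma pushN_id (r : ℝ) (x : Fin n → Plane) (z : Plane) : pushN r x x z = z :=
  pushL_id r x _ z

lemma pushNInv_pushN (hr : 0 < r) (hclose : ∀ i, dist (y i) (x i) ≤ r / 2) (z : Plane) :
    pushNInv r x y (pushN r x y z) = z := pushLInv_pushL hr hclose _ z

lemma pushN_pushNInv (hr : 0 < r) (hclose : ∀ i, dist (y i) (x i) ≤ r / 2) (w : Plane) :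
    pushN r x y (pushNInv r x y w) = w := pushL_pushLInv hr hclose _ w

lemma pushN_continuous {α : Type*} [TopologicalSpace α] (r : ℝ)
    {x y : α → Fin n → Plane} {w : α → Plane}
    (hx : Continuous x) (hy : Continuous y) (hw : Continuous w) :
    Continuous (fun a => pushN r (x a) (y a) (w a)) :=
  pushL_continuous r _ hx hy hw

lemma pushNInv_continuous {α : Type*} [TopologicalSpace α] {r : ℝ} (hr : 0 < r)
    {x y : α → Fin n → Plane} {w : α → Plane}
    (hx : Continuous x) (hy : Continuous y) (hw : Continuous w)
    (hclose : ∀ a i, dist (y a i) (x a i) ≤ r / 2) :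
    Continuous (fun a => pushNInv r (x a) (y a) (w a)) :=
  pushLInv_continuous hr _ hx hy hw hclose

end ListPush
end PushSec
noncomputable section Chain

open Set

/-- clamp a real number into the unit interval -/
def pr (x : ℝ) : unitInterval := Set.projIcc 0 1 zero_le_one x

lemma pr_coe (x : ℝ) : (pr x : ℝ) = max 0 (min 1 x) := rfl

lemma pr_of_mem {x : ℝ} (h0 : 0 ≤ x) (h1 : x ≤ 1) : (pr x : ℝ) = x := by
  rw [pr_coe, min_eq_right h1, max_eq_right h0]

lemma pr_val (t : unitInterval) : pr (t : ℝ) = t := Set.projIcc_val zero_le_one t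

lemma pr_zero : pr 0 = 0 := pr_val 0

lemma continuous_pr : Continuous pr := by unfold pr; exact continuous_projIcc

lemma dist_pr_le (a b : ℝ) : dist (pr a) (pr b) ≤ |a - b| := by
  rw [Subtype.dist_eq, Real.dist_eq, pr_coe, pr_coe]
  calc |max 0 (min 1 a) - max 0 (min 1 b)| ≤ |min 1 a - min 1 b| := by
        have := abs_max_sub_max_le_abs (min 1 a) (min 1 b) 0
        simpa [max_comm] using this
    _ ≤ max |(1:ℝ) - 1| |a - b| := abs_min_sub_min_le_max 1 a 1 b
    _ ≤ |a - b| := by simp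

variable {n : ℕ}

/-- grid point k/N in the unit interval -/
def tk (N k : ℕ) : unitInterval := pr ((k : ℝ) / N)

/-- t clamped to [k/N, (k+1)/N] -/
def ck (N k : ℕ) (t : unitInterval) : unitInterval :=
  pr (min (((k : ℝ) + 1) / N) (max ((k : ℝ) / N) (t : ℝ)))

lemma continuous_ck (N k : ℕ) : Continuous (fun t : unitInterval => ck N k t) := by
  apply continuous_pr.comp
  fun_prop

/-- The chain of pushes realizing the motion Γ(s,·) up to time t, in k grid steps. -/
def Gk (r : ℝ) (Γ : unitInterval × unitInterval → Fin n → Plane) (N : ℕ) :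
    ℕ → unitInterval × unitInterval → Plane → Plane
  | 0 => fun _ z => z
  | k + 1 => fun q z =>
      pushN r (Γ (q.1, tk N k)) (Γ (q.1, ck N k q.2)) (Gk r Γ N k q z)

def GkInv (r : ℝ) (Γ : unitInterval × unitInterval → Fin n → Plane) (N : ℕ) :
    ℕ → unitInterval × unitInterval → Plane → Plane
  | 0 => fun _ w => w
  | k + 1 => fun q w =>
      GkInv r Γ N k q (pushNInv r (Γ (q.1, tk N k)) (Γ (q.1, ck N k q.2)) w)

variable {r : ℝ} {Γ : unitInterval × unitInterval → Fin n → Plane} {N : ℕ}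

section ChainLemmas

variable (hr : 0 < r)
  (Hstep : ∀ (s t : unitInterval) (k : ℕ), k < N →
    ∀ i, dist (Γ (s, ck N k t) i) (Γ (s, tk N k) i) ≤ r / 2)

include hr Hstep

lemma GkInv_Gk {k : ℕ} (hk : k ≤ N) (q : unitInterval × unitInterval) (z : Plane) :
    GkInv r Γ N k q (Gk r Γ N k q z) = z := by
  induction k with
  | zero => rfl
  | succ k ih =>
    simp only [Gk, GkInv]
    rw [pushNInv_pushN hr (Hstep q.1 q.2 k (Nat.lt_of_succ_le hk)),
      ih (Nat.le_of_succ_le hk)]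

lemma Gk_GkInv {k : ℕ} (hk : k ≤ N) (q : unitInterval × unitInterval) (w : Plane) :
    Gk r Γ N k q (GkInv r Γ N k q w) = w := by
  induction k generalizing w with
  | zero => rfl
  | succ k ih =>
    simp only [Gk, GkInv]
    rw [ih (Nat.le_of_succ_le hk),
      pushN_pushNInv hr (Hstep q.1 q.2 k (Nat.lt_of_succ_le hk))]

variable (Hsep : ∀ (q : unitInterval × unitInterval) (i j : Fin n),
    i ≠ j → 3 * r ≤ dist (Γ q i) (Γ q j))

include Hsep

lemma Gk_track {k : ℕ} (hk : k ≤ N) (q : unitInterval × unitInterval) (i : Fin n) :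
    Gk r Γ N k q (Γ (q.1, 0) i) = Γ (q.1, pr (min ((k : ℝ) / N) (q.2 : ℝ))) i := by
  induction k with
  | zero =>
    have h0 : pr (min (((0:ℕ) : ℝ) / N) ((q.2 : ℝ))) = 0 := by
      rw [show ((0:ℕ):ℝ)/(N:ℝ) = (0:ℝ) by norm_num, min_eq_left q.2.2.1, pr_zero]
    simp only [Gk]
    rw [h0]
  | succ k ih =>
    have hkN : k < N := Nat.lt_of_succ_le hk
    have hkk1 : (k : ℝ) / N ≤ ((k : ℝ) + 1) / N := by
      rcases Nat.eq_zero_or_pos N with h0 | h0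
      · simp [h0]
      · have hN' : (0:ℝ) < N := by exact_mod_cast h0
        gcongr
        linarith
    simp only [Gk]
    rw [ih (Nat.le_of_succ_le hk)]
    rcases le_total (q.2 : ℝ) ((k : ℝ) / N) with h | h
    · -- t below this step: the step is the identity
      have hck : ck N k q.2 = tk N k := by
        apply Subtype.ext
        simp only [ck, tk, pr_coe]
        rw [max_eq_left h, min_eq_right hkk1]
      rw [hck, pushN_id]
      have harg : pr (min ((k : ℝ) / N) (q.2 : ℝ)) = pr (min ((((k:ℕ)+1 : ℕ)) / (N:ℝ)) (q.2 : ℝ)) := by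
        rw [min_eq_right h]
        push_cast
        rw [min_eq_right (h.trans hkk1)]
      rw [harg]
    · -- t at or above this step: push from the grid point
      have harg : pr (min ((k : ℝ) / N) (q.2 : ℝ)) = tk N k := by
        rw [min_eq_left h]; rfl
      rw [harg]
      rw [pushN_track hr (Hsep (q.1, tk N k)) (Hstep q.1 q.2 k hkN) i]
      have : ck N k q.2 = pr (min ((((k:ℕ)+1 : ℕ)) / (N:ℝ)) (q.2 : ℝ)) := by
        apply Subtype.ext
        simp only [ck, pr_coe]
        rw [max_eq_right h]
        push_cast
        ring_nf
      rw [this]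

end ChainLemmas

lemma Gk_continuous (r : ℝ) (Γ : unitInterval × unitInterval → Fin n → Plane) (N : ℕ)
    (hΓ : Continuous Γ) (k : ℕ) :
    Continuous (fun p : (unitInterval × unitInterval) × Plane => Gk r Γ N k p.1 p.2) := by
  induction k with
  | zero => exact continuous_snd
  | succ k ih =>
    simp only [Gk]
    apply pushN_continuous r ?_ ?_ ih
    · exact hΓ.comp ((continuous_fst.comp continuous_fst).prodMk continuous_const)
    · exact hΓ.comp ((continuous_fst.comp continuous_fst).prodMk
        ((continuous_ck N k).comp (continuous_snd.comp continuous_fst)))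

lemma GkInv_continuous {r : ℝ} (hr : 0 < r) (Γ : unitInterval × unitInterval → Fin n → Plane)
    {N : ℕ} (hΓ : Continuous Γ)
    (Hstep : ∀ (s t : unitInterval) (k : ℕ), k < N →
      ∀ i, dist (Γ (s, ck N k t) i) (Γ (s, tk N k) i) ≤ r / 2)
    {k : ℕ} (hk : k ≤ N) :
    Continuous (fun p : (unitInterval × unitInterval) × Plane => GkInv r Γ N k p.1 p.2) := by
  induction k with
  | zero => exact continuous_snd
  | succ k ih =>
    simp only [GkInv]
    have hx : Continuous fun p : (unitInterval × unitInterval) × Plane => Γ (p.1.1, tk N k) :=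
      hΓ.comp ((continuous_fst.comp continuous_fst).prodMk continuous_const)
    have hy : Continuous fun p : (unitInterval × unitInterval) × Plane => Γ (p.1.1, ck N k p.1.2) :=
      hΓ.comp ((continuous_fst.comp continuous_fst).prodMk
        ((continuous_ck N k).comp (continuous_snd.comp continuous_fst)))
    have hinner : Continuous fun p : (unitInterval × unitInterval) × Plane =>
        pushNInv r (Γ (p.1.1, tk N k)) (Γ (p.1.1, ck N k p.1.2)) p.2 :=
      pushNInv_continuous hr hx hy continuous_snd
        (fun p i => Hstep p.1.1 p.1.2 k (Nat.lt_of_succ_le hk) i)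
    have := (ih (Nat.le_of_succ_le hk)).comp
      (continuous_fst.prodMk hinner)
    exact this

end Chain
noncomputable section Retraction

/-- denominator for the retraction of the square onto three of its edges -/
def Dd (q : unitInterval × unitInterval) : ℝ :=
  max ((2 - (q.2 : ℝ)) / 2) |2 * (q.1 : ℝ) - 1|

lemma Dd_pos (q : unitInterval × unitInterval) : 0 < Dd q := by
  have h := q.2.2.2
  have : (0:ℝ) < (2 - (q.2 : ℝ)) / 2 := by
    have : (q.2 : ℝ) ≤ 1 := h
    linarith
  exact lt_max_of_lt_left this

lemma Dd_continuous : Continuous Dd := by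
  unfold Dd
  fun_prop

/-- retraction of the unit square onto the union of left, bottom and right edges -/
def piQ (q : unitInterval × unitInterval) : unitInterval × unitInterval :=
  (pr (1/2 + (Dd q)⁻¹ * ((q.1 : ℝ) - 1/2)), pr (2 - (Dd q)⁻¹ * (2 - (q.2 : ℝ))))

lemma piQ_continuous : Continuous piQ := by
  have hinv : Continuous fun q : unitInterval × unitInterval => (Dd q)⁻¹ :=
    Dd_continuous.inv₀ (fun q => (Dd_pos q).ne')
  apply Continuous.prodMk
  · exact continuous_pr.comp (by fun_prop)
  · exact continuous_pr.comp (by fun_prop)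

lemma abs_two_mul_sub_one_le (s : unitInterval) : |2 * (s : ℝ) - 1| ≤ 1 := by
  have h1 := s.2.1
  have h2 := s.2.2
  rw [abs_le]; constructor <;> linarith

lemma Dd_eq_one_left (t : unitInterval) : Dd (0, t) = 1 := by
  unfold Dd
  have h1 := t.2.1
  have : |2 * ((0 : unitInterval) : ℝ) - 1| = 1 := by norm_num
  rw [this]
  apply max_eq_right
  linarith

lemma Dd_eq_one_right (t : unitInterval) : Dd (1, t) = 1 := by
  unfold Dd
  have h1 := t.2.1
  have : |2 * ((1 : unitInterval) : ℝ) - 1| = 1 := by norm_num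
  rw [this]
  apply max_eq_right
  linarith

lemma Dd_eq_one_bottom (s : unitInterval) : Dd (s, 0) = 1 := by
  unfold Dd
  have : ((2:ℝ) - ((0 : unitInterval) : ℝ)) / 2 = 1 := by norm_num
  rw [this]
  exact max_eq_left (abs_two_mul_sub_one_le s)

lemma piQ_bottom (s : unitInterval) : piQ (s, 0) = (s, 0) := by
  unfold piQ
  rw [Dd_eq_one_bottom]
  refine Prod.ext ?_ ?_
  · show pr (1/2 + (1:ℝ)⁻¹ * ((s:ℝ) - 1/2)) = s
    rw [show (1/2 + (1:ℝ)⁻¹ * ((s:ℝ) - 1/2)) = (s:ℝ) by ring, pr_val]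
  · show pr (2 - (1:ℝ)⁻¹ * (2 - ((0 : unitInterval) : ℝ))) = 0
    rw [show (2 - (1:ℝ)⁻¹ * (2 - ((0 : unitInterval) : ℝ))) = (0:ℝ) by norm_num, pr_zero]

lemma piQ_left (t : unitInterval) : piQ (0, t) = (0, t) := by
  unfold piQ
  rw [Dd_eq_one_left]
  refine Prod.ext ?_ ?_
  · show pr (1/2 + (1:ℝ)⁻¹ * (((0 : unitInterval) : ℝ) - 1/2)) = 0
    rw [show (1/2 + (1:ℝ)⁻¹ * (((0 : unitInterval) : ℝ) - 1/2)) = (0:ℝ) by norm_num, pr_zero]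
  · show pr (2 - (1:ℝ)⁻¹ * (2 - (t : ℝ))) = t
    rw [show (2 - (1:ℝ)⁻¹ * (2 - (t : ℝ))) = (t:ℝ) by ring, pr_val]

lemma piQ_right (t : unitInterval) : piQ (1, t) = (1, t) := by
  unfold piQ
  rw [Dd_eq_one_right]
  refine Prod.ext ?_ ?_
  · show pr (1/2 + (1:ℝ)⁻¹ * (((1 : unitInterval) : ℝ) - 1/2)) = 1
    rw [show (1/2 + (1:ℝ)⁻¹ * (((1 : unitInterval) : ℝ) - 1/2)) = (1:ℝ) by norm_num]
    exact pr_val 1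
  · show pr (2 - (1:ℝ)⁻¹ * (2 - (t : ℝ))) = t
    rw [show (2 - (1:ℝ)⁻¹ * (2 - (t : ℝ))) = (t:ℝ) by ring, pr_val]

/-- the retraction lands on the three edges -/
lemma piQ_mem (q : unitInterval × unitInterval) :
    (piQ q).2 = 0 ∨ (piQ q).1 = 0 ∨ (piQ q).1 = 1 := by
  rcases le_total |2 * (q.1 : ℝ) - 1| ((2 - (q.2 : ℝ)) / 2) with h | h
  · left
    have ht : (q.2 : ℝ) ≤ 1 := q.2.2.2
    have h2t : (2 - (q.2 : ℝ)) ≠ 0 := by linarith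
    have hD : Dd q = (2 - (q.2 : ℝ)) / 2 := max_eq_left h
    show pr (2 - (Dd q)⁻¹ * (2 - (q.2 : ℝ))) = 0
    rw [hD, show (2 - ((2 - (q.2:ℝ))/2)⁻¹ * (2 - (q.2:ℝ))) = (0:ℝ) by field_simp; norm_num, pr_zero]
  · have hD : Dd q = |2 * (q.1 : ℝ) - 1| := max_eq_right h
    have hpos : (0:ℝ) < (2 - (q.2 : ℝ)) / 2 := by
      have := q.2.2.2; linarith
    have habs : 0 < |2 * (q.1 : ℝ) - 1| := lt_of_lt_of_le hpos h
    right
    rcases lt_trichotomy (2 * (q.1 : ℝ) - 1) 0 with hs | hs | hs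
    · left
      show pr (1/2 + (Dd q)⁻¹ * ((q.1 : ℝ) - 1/2)) = 0
      have habs' : |2 * (q.1 : ℝ) - 1| = -(2 * (q.1 : ℝ) - 1) := abs_of_neg hs
      have hne : -(2 * (q.1:ℝ) - 1) ≠ 0 := by linarith
      rw [hD, habs', show (1/2 + (-(2 * (q.1:ℝ) - 1))⁻¹ * ((q.1:ℝ) - 1/2)) = (0:ℝ) by
        linear_combination (-1/2 : ℝ) * inv_mul_cancel₀ hne, pr_zero]
    · exfalso; rw [hs, abs_zero] at habs; exact lt_irrefl 0 habs
    · right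
      show pr (1/2 + (Dd q)⁻¹ * ((q.1 : ℝ) - 1/2)) = 1
      have habs' : |2 * (q.1 : ℝ) - 1| = 2 * (q.1 : ℝ) - 1 := abs_of_pos hs
      have hne : (2 * (q.1:ℝ) - 1) ≠ 0 := by linarith
      rw [hD, habs', show (1/2 + (2 * (q.1:ℝ) - 1)⁻¹ * ((q.1:ℝ) - 1/2)) = (1:ℝ) by
        linear_combination (1/2 : ℝ) * inv_mul_cancel₀ hne]
      exact pr_val 1

end Retraction
set_option maxHeartbeats 1000000 in
theorem statement_1 (n : ℕ) (hn : 1 ≤ n)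
    (γ γ' : unitInterval → Fin n → Plane)
    (hγcont : Continuous γ) (hγ'cont : Continuous γ')
    (hγconf : ∀ t : unitInterval, Function.Injective (γ t))
    (hγ'conf : ∀ t : unitInterval, Function.Injective (γ' t))
    (h0 : γ' 0 = γ 0) (h1 : γ' 1 = γ 1)
    -- `γ` and `γ'` are homotopic relative to `{0,1}` within the configuration space
    (hhom : ∃ Γ : unitInterval × unitInterval → Fin n → Plane,
      Continuous Γ ∧
      (∀ s t : unitInterval, Function.Injective (Γ (s, t))) ∧
      (∀ t : unitInterval, Γ (0, t) = γ t) ∧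
      (∀ t : unitInterval, Γ (1, t) = γ' t) ∧
      (∀ s : unitInterval, Γ (s, 0) = γ 0) ∧
      (∀ s : unitInterval, Γ (s, 1) = γ 1))
    (ψ ψ' : unitInterval × Plane → Plane)
    (hψcont : Continuous ψ) (hψ'cont : Continuous ψ')
    (hψhomeo : ∀ t : unitInterval, ∃ e : Plane ≃ₜ Plane, (fun z => ψ (t, z)) = e)
    (hψ'homeo : ∀ t : unitInterval, ∃ e : Plane ≃ₜ Plane, (fun z => ψ' (t, z)) = e)
    (hψ0 : ∀ z : Plane, ψ (0, z) = z) (hψ'0 : ∀ z : Plane, ψ' (0, z) = z)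
    (hψγ : ∀ (t : unitInterval) (i : Fin n), ψ (t, γ 0 i) = γ t i)
    (hψ'γ : ∀ (t : unitInterval) (i : Fin n), ψ' (t, γ 0 i) = γ' t i) :
    ∃ H : unitInterval × unitInterval × Plane → Plane,
      Continuous H ∧
      (∀ s t : unitInterval, ∃ e : Plane ≃ₜ Plane, (fun z => H (s, t, z)) = e) ∧
      (∀ (s : unitInterval) (z : Plane), H (s, 0, z) = z) ∧
      (∀ (t : unitInterval) (z : Plane), H (0, t, z) = ψ (t, z)) ∧
      (∀ (t : unitInterval) (z : Plane), H (1, t, z) = ψ' (t, z)) ∧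
      (∀ (s : unitInterval) (i : Fin n), H (s, 1, γ 0 i) = γ 1 i) := by
  classical
  obtain ⟨Γ, hΓc, hΓinj, hΓ0, hΓ1, hΓs0, hΓs1⟩ := hhom
  -- a positive separation radius for the whole homotopy of configurations
  obtain ⟨r, hr, Hsep⟩ : ∃ r : ℝ, 0 < r ∧ ∀ (q : unitInterval × unitInterval) (i j : Fin n),
      i ≠ j → 3 * r ≤ dist (Γ q i) (Γ q j) := by
    have hgmin : ∀ i j : Fin n, i ≠ j → ∃ c : ℝ, 0 < c ∧
        ∀ q : unitInterval × unitInterval, c ≤ dist (Γ q i) (Γ q j) := by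
      intro i j hij
      have hcont : Continuous fun q : unitInterval × unitInterval => dist (Γ q i) (Γ q j) :=
        Continuous.dist ((continuous_apply i).comp hΓc) ((continuous_apply j).comp hΓc)
      obtain ⟨q0, -, hq0⟩ := isCompact_univ.exists_isMinOn
        (Set.univ_nonempty) hcont.continuousOn
      refine ⟨dist (Γ q0 i) (Γ q0 j), ?_, fun q => isMinOn_iff.1 hq0 q (Set.mem_univ q)⟩
      refine dist_pos.2 (fun h => hij (hΓinj q0.1 q0.2 ?_))
      rw [Prod.mk.eta]
      exact h
    set Sfin : Finset (Fin n × Fin n) :=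
      Finset.univ.filter (fun p : Fin n × Fin n => p.1 ≠ p.2) with hSfin
    choose! c hc hcle using fun (p : Fin n × Fin n) (h : p.1 ≠ p.2) => hgmin p.1 p.2 h
    by_cases hS : Sfin.Nonempty
    · refine ⟨(min 1 (Sfin.inf' hS c)) / 3, ?_, ?_⟩
      · have : 0 < Sfin.inf' hS c := by
          rw [Finset.lt_inf'_iff]
          intro p hp
          exact hc p (Finset.mem_filter.1 hp).2
        positivity
      · intro q i j hij
        have hmem : (i, j) ∈ Sfin := by
          rw [hSfin, Finset.mem_filter]
          exact ⟨Finset.mem_univ _, hij⟩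
        calc 3 * (min 1 (Sfin.inf' hS c) / 3) = min 1 (Sfin.inf' hS c) := by ring
          _ ≤ Sfin.inf' hS c := min_le_right _ _
          _ ≤ c (i, j) := Finset.inf'_le c hmem
          _ ≤ dist (Γ q i) (Γ q j) := hcle (i, j) hij q
    · refine ⟨1, one_pos, fun q i j hij => absurd ⟨(i, j), ?_⟩ hS⟩
      rw [hSfin, Finset.mem_filter]
      exact ⟨Finset.mem_univ _, hij⟩
  -- uniform continuity: choose the grid size N
  have hΓu := CompactSpace.uniformContinuous_of_continuous hΓc
  rw [Metric.uniformContinuous_iff] at hΓu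
  obtain ⟨δ, hδ, hδ'⟩ := hΓu (r / 2) (by positivity)
  obtain ⟨N₀, hN₀⟩ := exists_nat_one_div_lt hδ
  set N : ℕ := N₀ + 1 with hNdef
  have hNR : (0:ℝ) < N := by positivity
  have Hstep : ∀ (s t : unitInterval) (k : ℕ), k < N →
      ∀ i, dist (Γ (s, ck N k t) i) (Γ (s, tk N k) i) ≤ r / 2 := by
    intro s t k _ i
    have hkk1 : ((k:ℝ))/N ≤ ((k:ℝ)+1)/N := by gcongr; linarith
    have h1 : dist (ck N k t) (tk N k)
        ≤ |min (((k:ℝ)+1)/N) (max ((k:ℝ)/N) (t:ℝ)) - (k:ℝ)/N| := dist_pr_le _ _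
    have hlow : (k:ℝ)/N ≤ min (((k:ℝ)+1)/N) (max ((k:ℝ)/N) (t:ℝ)) :=
      le_min hkk1 (le_max_left _ _)
    have hhigh : min (((k:ℝ)+1)/N) (max ((k:ℝ)/N) (t:ℝ)) ≤ ((k:ℝ)+1)/N := min_le_left _ _
    have hsub : ((k:ℝ)+1)/N - (k:ℝ)/N = 1/N := by ring
    have habs : |min (((k:ℝ)+1)/N) (max ((k:ℝ)/N) (t:ℝ)) - (k:ℝ)/N| ≤ 1/N := by
      rw [abs_of_nonneg (by linarith)]
      linarith
    have hdistq : dist ((s, ck N k t) : unitInterval × unitInterval) (s, tk N k) < δ := by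
      rw [Prod.dist_eq, dist_self]
      have : dist (ck N k t) (tk N k) < δ := by
        calc dist (ck N k t) (tk N k) ≤ 1/N := h1.trans habs
          _ = 1/((N₀:ℝ)+1) := by rw [hNdef]; push_cast; ring_nf
          _ < δ := hN₀
      calc (0 : ℝ) ⊔ dist (ck N k t) (tk N k) = dist (ck N k t) (tk N k) :=
            max_eq_right dist_nonneg
        _ < δ := this
    calc dist (Γ (s, ck N k t) i) (Γ (s, tk N k) i)
        ≤ dist (Γ (s, ck N k t)) (Γ (s, tk N k)) := dist_le_pi_dist _ _ i
      _ ≤ r / 2 := le_of_lt (hδ' hdistq)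
  -- the ambient realization of Γ and its inverse
  have hGinvG0 : ∀ q z, GkInv r Γ N N q (Gk r Γ N N q z) = z :=
    fun q z => GkInv_Gk hr Hstep le_rfl q z
  have hGGinv0 : ∀ q w, Gk r Γ N N q (GkInv r Γ N N q w) = w :=
    fun q w => Gk_GkInv hr Hstep le_rfl q w
  have hGtrack0 : ∀ (q : unitInterval × unitInterval) (i : Fin n),
      Gk r Γ N N q (γ 0 i) = Γ q i := by
    intro q i
    have harg : pr (min ((N:ℝ)/N) (q.2:ℝ)) = q.2 := by
      rw [div_self hNR.ne', min_eq_right q.2.2.2, pr_val]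
    have := Gk_track hr Hstep Hsep le_rfl q i
    rw [hΓs0, harg, Prod.mk.eta] at this
    exact this
  have hGc0 : Continuous (fun p : (unitInterval × unitInterval) × Plane => Gk r Γ N N p.1 p.2) :=
    Gk_continuous r Γ N hΓc N
  have hGIc0 : Continuous (fun p : (unitInterval × unitInterval) × Plane =>
      GkInv r Γ N N p.1 p.2) := GkInv_continuous hr Γ hΓc Hstep le_rfl
  -- package the ambient realization as opaque data
  obtain ⟨Gf, GIf, hGinvG, hGGinv, hGtrack, hGc, hGIc⟩ :
      ∃ (Gf GIf : (unitInterval × unitInterval) → Plane → Plane),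
        (∀ q z, GIf q (Gf q z) = z) ∧ (∀ q w, Gf q (GIf q w) = w) ∧
        (∀ (q : unitInterval × unitInterval) (i : Fin n), Gf q (γ 0 i) = Γ q i) ∧
        Continuous (fun p : (unitInterval × unitInterval) × Plane => Gf p.1 p.2) ∧
        Continuous (fun p : (unitInterval × unitInterval) × Plane => GIf p.1 p.2) :=
    ⟨Gk r Γ N N, GkInv r Γ N N, hGinvG0, hGGinv0, hGtrack0, hGc0, hGIc0⟩
  clear hGinvG0 hGGinv0 hGtrack0 hGc0 hGIc0
  -- the boundary family
  set B : (unitInterval × unitInterval) → Plane → Plane :=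
    fun a z => ψ (pr ((1 - (a.1:ℝ)) * (a.2:ℝ)), ψ' (pr ((a.1:ℝ) * (a.2:ℝ)), z)) with hBdef
  have hBc : Continuous (fun p : (unitInterval × unitInterval) × Plane => B p.1 p.2) := by
    rw [hBdef]
    apply hψcont.comp
    apply Continuous.prodMk
    · exact continuous_pr.comp (by fun_prop)
    · apply hψ'cont.comp
      apply Continuous.prodMk
      · exact continuous_pr.comp (by fun_prop)
      · exact continuous_snd
  have hBbottom : ∀ (a : unitInterval) (z : Plane), B (a, 0) z = z := by
    intro a z
    rw [hBdef]
    show ψ (pr ((1 - (a:ℝ)) * (((0:unitInterval)):ℝ)), ψ' (pr ((a:ℝ) * (((0:unitInterval)):ℝ)), z)) = z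
    rw [show ((1 - (a:ℝ)) * (((0:unitInterval)):ℝ)) = (0:ℝ) by norm_num,
      show ((a:ℝ) * (((0:unitInterval)):ℝ)) = (0:ℝ) by norm_num, pr_zero, hψ'0, hψ0]
  have hBleft : ∀ (t : unitInterval) (z : Plane), B (0, t) z = ψ (t, z) := by
    intro t z
    rw [hBdef]
    show ψ (pr ((1 - ((0:unitInterval):ℝ)) * (t:ℝ)), ψ' (pr (((0:unitInterval):ℝ) * (t:ℝ)), z)) = ψ (t, z)
    rw [show ((1 - ((0:unitInterval):ℝ)) * (t:ℝ)) = ((t:ℝ)) by norm_num,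
      show (((0:unitInterval):ℝ) * (t:ℝ)) = (0:ℝ) by norm_num, pr_zero, hψ'0, pr_val]
  have hBright : ∀ (t : unitInterval) (z : Plane), B (1, t) z = ψ' (t, z) := by
    intro t z
    rw [hBdef]
    show ψ (pr ((1 - ((1:unitInterval):ℝ)) * (t:ℝ)), ψ' (pr (((1:unitInterval):ℝ) * (t:ℝ)), z)) = ψ' (t, z)
    rw [show ((1 - ((1:unitInterval):ℝ)) * (t:ℝ)) = (0:ℝ) by norm_num,
      show (((1:unitInterval):ℝ) * (t:ℝ)) = ((t:ℝ)) by norm_num, pr_zero, pr_val, hψ0]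
  have hBtrack : ∀ a : unitInterval × unitInterval, (a.2 = 0 ∨ a.1 = 0 ∨ a.1 = 1) →
      ∀ i : Fin n, B a (γ 0 i) = Γ a i := by
    rintro ⟨a1, a2⟩ (h | h | h) i
    · simp only at h
      subst h
      rw [hBbottom a1 (γ 0 i), hΓs0 a1]
    · simp only at h
      subst h
      rw [hBleft a2 (γ 0 i), hψγ a2 i, ← hΓ0 a2]
    · simp only at h
      subst h
      rw [hBright a2 (γ 0 i), hψ'γ a2 i, ← hΓ1 a2]
  have hBhomeo : ∀ a : unitInterval × unitInterval,
      ∃ e : Plane ≃ₜ Plane, (fun z => B a z) = e := by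
    intro a
    obtain ⟨e1, he1⟩ := hψhomeo (pr ((1 - (a.1:ℝ)) * (a.2:ℝ)))
    obtain ⟨e2, he2⟩ := hψ'homeo (pr ((a.1:ℝ) * (a.2:ℝ)))
    refine ⟨e2.trans e1, ?_⟩
    funext z
    rw [hBdef]
    show ψ (_, ψ' (_, z)) = e1 (e2 z)
    rw [show ψ' (pr ((a.1:ℝ) * (a.2:ℝ)), z) = e2 z from congrFun he2 z]
    exact congrFun he1 (e2 z)
  -- homeomorphism packaging for the ambient realization
  have mkhomeo : ∀ q0 : unitInterval × unitInterval, ∃ e : Plane ≃ₜ Plane,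
      Gf q0 = ⇑e ∧ GIf q0 = ⇑e.symm := by
    intro q0
    refine ⟨⟨⟨Gf q0, GIf q0, fun z => hGinvG q0 z, fun w => hGGinv q0 w⟩,
      ?_, ?_⟩, rfl, rfl⟩
    · exact hGc.comp (continuous_const.prodMk continuous_id)
    · exact hGIc.comp (continuous_const.prodMk continuous_id)
  -- the final map
  refine ⟨fun p => Gf (p.1, p.2.1)
    (GIf (piQ (p.1, p.2.1)) (B (piQ (p.1, p.2.1)) p.2.2)), ?_, ?_, ?_, ?_, ?_, ?_⟩
  · -- continuity
    have hq : Continuous fun p : unitInterval × unitInterval × Plane => (p.1, p.2.1) := by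
      fun_prop
    have hz : Continuous fun p : unitInterval × unitInterval × Plane => p.2.2 := by fun_prop
    have hB' : Continuous fun p : unitInterval × unitInterval × Plane =>
        B (piQ (p.1, p.2.1)) p.2.2 := hBc.comp ((piQ_continuous.comp hq).prodMk hz)
    have hGI' : Continuous fun p : unitInterval × unitInterval × Plane =>
        GIf (piQ (p.1, p.2.1)) (B (piQ (p.1, p.2.1)) p.2.2) :=
      hGIc.comp ((piQ_continuous.comp hq).prodMk hB')
    exact hGc.comp (hq.prodMk hGI')
  · -- each time slice is a homeomorphism
    intro s t
    obtain ⟨eB, heB⟩ := hBhomeo (piQ (s, t))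
    obtain ⟨e1, he1, -⟩ := mkhomeo (s, t)
    obtain ⟨e2, -, he2'⟩ := mkhomeo (piQ (s, t))
    refine ⟨(eB.trans e2.symm).trans e1, ?_⟩
    funext z
    show Gf (s, t) (GIf (piQ (s, t)) (B (piQ (s, t)) z)) = e1 (e2.symm (eB z))
    rw [he1, he2', show B (piQ (s, t)) z = eB z from congrFun heB z]
  · -- bottom edge: identity
    intro s z
    show Gf (s, 0) (GIf (piQ (s, 0)) (B (piQ (s, 0)) z)) = z
    rw [piQ_bottom, hBbottom, hGGinv]
  · -- left edge: ψ
    intro t z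
    show Gf (0, t) (GIf (piQ (0, t)) (B (piQ (0, t)) z)) = ψ (t, z)
    rw [piQ_left, hBleft, hGGinv]
  · -- right edge: ψ'
    intro t z
    show Gf (1, t) (GIf (piQ (1, t)) (B (piQ (1, t)) z)) = ψ' (t, z)
    rw [piQ_right, hBright, hGGinv]
  · -- top edge: the marked points arrive at γ 1
    intro s i
    show Gf (s, 1) (GIf (piQ (s, 1)) (B (piQ (s, 1)) (γ 0 i))) = γ 1 i
    rw [hBtrack (piQ (s, 1)) (piQ_mem (s, 1)) i, ← hGtrack (piQ (s, 1)) i, hGinvG,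
      hGtrack (s, 1) i, hΓs1 s]
end
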